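/- arXiv:1502.06291 — 3 statements merged into one kernel-verified Lean document; each statement's English description precedes it below -/
import Mathlib

section
/- Let η₁,…,ηₙ be i.i.d. random variables with P(ηᵢ = 1) = P(ηᵢ = −1) = 1/2. For β ∈ ℝ^p define φ(β) := Σ_{i=1}^n ηᵢ (x_iβ* − x_iβ)². If |β*|₁ ≤ L, then E( sup_{β ∈ ℝ^p : |β|₁ ≤ L} φ(β) ) ≤ 3L² (2Mn log(2p²))^{1/2}. -/
/-!
Write `c_i = x_iβ*` and `d_i = x_iβ`. Then `η_i (c_i - d_i)² = η_i c_i² + η_i d_i (d_i - 2c_i)`,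
and summing over `i` the second part is the bilinear form `Σ_{j,k} β_j (β - 2β*)_k Z_{jk}` in the
signed Gram entries `Z_{jk} = Σ_i x_ij x_ik η_i`, whose coefficients have `ℓ¹` mass at most
`L · 3L`. Hence `sup φ ≤ Σ_i η_i c_i² + 3L² max_{j,k} |Z_{jk}|`, where the first term is centred.
By Hoeffding's lemma each `Z_{jk}` is sub-Gaussian with variance proxy `Σ_i x_ij² x_ik² ≤ Mn`
(Cauchy–Schwarz), and Jensen's inequality applied to `exp (t · max_{j,k} |Z_{jk}|)` bounds the
expected maximum of these `p²` variables by `(2Mn log(2p²))^{1/2}`.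
-/

open MeasureTheory ProbabilityTheory Real

open scoped NNReal

lemma le_sqrt_of_forall_mul_le {a b v : ℝ} (hv : 0 ≤ v)
    (h : ∀ t > 0, t * a ≤ b + v * t ^ 2 / 2) : a ≤ √(2 * v * b) := by
  rcases le_or_gt a 0 with ha | ha
  · exact ha.trans (sqrt_nonneg _)
  rcases hv.eq_or_lt with rfl | hv
  · have := h ((|b| + 1) / a) (by positivity)
    rw [div_mul_cancel₀ _ ha.ne'] at this
    linarith [le_abs_self b]
  · have := h (a / v) (by positivity)
    have key : a ^ 2 ≤ 2 * v * b := by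
      field_simp at this
      nlinarith
    rwa [le_sqrt ha.le ((sq_nonneg a).trans key)]

lemma sum_sq_mul_le_of_sum_pow_four_le {ι : Type*} (s : Finset ι) {f g : ι → ℝ} {V : ℝ}
    (hf : ∑ i ∈ s, f i ^ 4 ≤ V) (hg : ∑ i ∈ s, g i ^ 4 ≤ V) : ∑ i ∈ s, (f i * g i) ^ 2 ≤ V := by
  have hV : 0 ≤ V := (Finset.sum_nonneg fun i _ => by positivity).trans hf
  have hcs := Finset.sum_mul_sq_le_sq_mul_sq s (fun i => f i ^ 2) (fun i => g i ^ 2)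
  simp only [← pow_mul, ← mul_pow] at hcs
  refine (pow_le_pow_iff_left₀ (Finset.sum_nonneg fun i _ => by positivity) hV two_ne_zero).1 ?_
  calc _ ≤ (∑ i ∈ s, f i ^ 4) * ∑ i ∈ s, g i ^ 4 := hcs
    _ ≤ V ^ 2 := by rw [sq]; exact mul_le_mul hf hg (Finset.sum_nonneg fun i _ => by positivity) hV

lemma le_iSup_one_div_mul_mul {κ : Type*} [Finite κ] {n : ℕ} (hn : 0 < n) (S : κ → ℝ)
    (j : κ) : S j ≤ (⨆ j, (1 / n : ℝ) * S j) * n := by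
  have hn' : (n : ℝ) ≠ 0 := by exact_mod_cast hn.ne'
  calc S j = (1 / n : ℝ) * S j * n := by field_simp
    _ ≤ _ := by gcongr; exact le_ciSup (Finite.bddAbove_range fun j => (1 / n : ℝ) * S j) j

lemma exp_mul_iSup_abs_le_sum {ι : Type*} [Fintype ι] [Nonempty ι] (z : ι → ℝ) {t : ℝ}
    (ht : 0 ≤ t) : exp (t * ⨆ k, |z k|) ≤ ∑ k, (exp (t * z k) + exp (-t * z k)) := by
  obtain ⟨k, hk⟩ := exists_eq_ciSup_of_finite (f := fun k => |z k|)
  calc exp (t * ⨆ k, |z k|) = exp |t * z k| := by rw [← hk, abs_mul, abs_of_nonneg ht]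
    _ ≤ exp (t * z k) + exp (-t * z k) := by simpa only [neg_mul] using exp_abs_le (t * z k)
    _ ≤ ∑ k, (exp (t * z k) + exp (-t * z k)) :=
      Finset.single_le_sum (f := fun k => exp (t * z k) + exp (-t * z k))
        (fun _ _ => by positivity) (Finset.mem_univ k)

-- `hr` covers the junk value `∫ f = 0` when `f` is not integrable.
lemma integral_le_of_le_of_integrable {Ω : Type*} {mΩ : MeasurableSpace Ω} {μ : Measure Ω}
    {f g : Ω → ℝ} {r : ℝ} (hg : Integrable g μ) (hfg : ∀ ω, f ω ≤ g ω) (hgr : ∫ ω, g ω ∂μ ≤ r)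
    (hr : 0 ≤ r) : ∫ ω, f ω ∂μ ≤ r := by
  by_cases hf : Integrable f μ
  · exact (integral_mono hf hg hfg).trans hgr
  · rwa [integral_undef hf]

def IsRademacher {Ω : Type*} [MeasurableSpace Ω] (μ : Measure Ω) (e : Ω → ℝ) : Prop :=
  μ {ω | e ω = 1} = 1 / 2 ∧ μ {ω | e ω = -1} = 1 / 2

namespace IsRademacher

variable {Ω : Type*} {mΩ : MeasurableSpace Ω} {μ : Measure Ω} [IsProbabilityMeasure μ]
  {e : Ω → ℝ}

lemma ae_eq_one_or_eq_neg_one (h : IsRademacher μ e) (he : Measurable e) :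
    ∀ᵐ ω ∂μ, e ω = 1 ∨ e ω = -1 := by
  have hdisj : Disjoint {ω | e ω = 1} {ω | e ω = -1} :=
    Set.disjoint_left.2 fun ω (h : e ω = 1) (h' : e ω = -1) => by norm_num [h] at h'
  have hA : MeasurableSet {ω | e ω = 1} := he (measurableSet_singleton 1)
  have hB : MeasurableSet {ω | e ω = -1} := he (measurableSet_singleton (-1))
  refine (ae_iff_measure_eq (p := fun ω => e ω = 1 ∨ e ω = -1)
    (hA.union hB).nullMeasurableSet).2 ?_
  exact (measure_union hdisj hB).trans (by rw [h.1, h.2, ENNReal.add_halves, measure_univ])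

lemma integral_eq_zero (h : IsRademacher μ e) (he : Measurable e) : ∫ ω, e ω ∂μ = 0 := by
  have hA : MeasurableSet {ω | e ω = 1} := he (measurableSet_singleton 1)
  have hB : MeasurableSet {ω | e ω = -1} := he (measurableSet_singleton (-1))
  have hae : e =ᵐ[μ] fun ω =>
      {ω | e ω = 1}.indicator (fun _ => (1 : ℝ)) ω - {ω | e ω = -1}.indicator (fun _ => 1) ω := by
    filter_upwards [h.ae_eq_one_or_eq_neg_one he] with ω hω
    rcases hω with h | h <;> norm_num [Set.indicator_apply, h]
  rw [integral_congr_ae hae, integral_sub ((integrable_const 1).indicator hA)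
    ((integrable_const 1).indicator hB), integral_indicator_const _ hA,
    integral_indicator_const _ hB, measureReal_def, measureReal_def]
  simp [h.1, h.2]

lemma hasSubgaussianMGF (h : IsRademacher μ e) (he : Measurable e) :
    HasSubgaussianMGF e 1 μ := by
  have hIcc : ∀ᵐ ω ∂μ, e ω ∈ Set.Icc (-1) 1 := by
    filter_upwards [h.ae_eq_one_or_eq_neg_one he] with ω hω
    rcases hω with h | h <;> norm_num [h]
  convert hasSubgaussianMGF_of_mem_Icc_of_integral_eq_zero he.aemeasurable hIcc
    (h.integral_eq_zero he)
  ext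
  norm_num

end IsRademacher

lemma integral_sum_mul_eq_zero_of_isRademacher {Ω ι : Type*} {mΩ : MeasurableSpace Ω}
    {μ : Measure Ω} [IsProbabilityMeasure μ] [Fintype ι] {η : ι → Ω → ℝ}
    (hmeas : ∀ i, Measurable (η i)) (hrad : ∀ i, IsRademacher μ (η i)) (a : ι → ℝ) :
    ∫ ω, ∑ i, η i ω * a i ∂μ = 0 := by
  rw [integral_finsetSum _ fun i _ => ((hrad i).hasSubgaussianMGF (hmeas i)).integrable.mul_const _]
  simp [integral_mul_const, (hrad _).integral_eq_zero (hmeas _)]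

namespace ProbabilityTheory.HasSubgaussianMGF

variable {Ω : Type*} {mΩ : MeasurableSpace Ω} {μ : Measure Ω} {X : Ω → ℝ}

lemma mono {c d : ℝ≥0} (h : HasSubgaussianMGF X c μ) (hcd : c ≤ d) :
    HasSubgaussianMGF X d μ :=
  ⟨h.integrable_exp_mul, fun t => (h.mgf_le t).trans (exp_le_exp.2 (by gcongr))⟩

lemma sum_mul_of_iIndepFun {ι : Type*} {η : ι → Ω → ℝ} (hindep : iIndepFun η μ)
    (hη : ∀ i, HasSubgaussianMGF (η i) 1 μ) (a : ι → ℝ) (s : Finset ι) :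
    HasSubgaussianMGF (fun ω => ∑ i ∈ s, a i * η i ω) (∑ i ∈ s, ‖a i‖₊ ^ 2) μ := by
  convert HasSubgaussianMGF.sum_of_iIndepFun (X := fun i ω => a i * η i ω)
    (hindep.comp (fun i u => a i * u) fun i => measurable_const_mul (a i))
    (s := s) fun i _ => (hη i).const_mul (a i) using 1
  refine Finset.sum_congr rfl fun i _ => ?_
  ext
  -- `const_mul` writes its constant as a bare subtype `⟨a², _⟩`, which `NNReal` lemmas do not match.
  exact (by simp : ((‖a i‖₊ ^ 2 : ℝ≥0) : ℝ) = a i ^ 2).trans (mul_one _).symm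

lemma sum_mul_mul_of_iIndepFun {ι : Type*} [Fintype ι] {η : ι → Ω → ℝ}
    (hindep : iIndepFun η μ) (hη : ∀ i, HasSubgaussianMGF (η i) 1 μ) {f g : ι → ℝ} {V : ℝ}
    (hf : ∑ i, f i ^ 4 ≤ V) (hg : ∑ i, g i ^ 4 ≤ V) :
    HasSubgaussianMGF (fun ω => ∑ i, f i * g i * η i ω) V.toNNReal μ := by
  refine (sum_mul_of_iIndepFun hindep hη _ _).mono ?_
  rw [← NNReal.coe_le_coe, Real.coe_toNNReal _ ((Finset.sum_nonneg fun i _ => by positivity).trans hf)]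
  push_cast
  simp only [Real.norm_eq_abs, sq_abs]
  exact sum_sq_mul_le_of_sum_pow_four_le _ hf hg

end ProbabilityTheory.HasSubgaussianMGF

section MaximalInequality

variable {Ω ι : Type*} {mΩ : MeasurableSpace Ω} {μ : Measure Ω} [Fintype ι]
  {Z : ι → Ω → ℝ} {c : ℝ≥0}

lemma integrable_iSup_abs (hZ : ∀ k, Integrable (Z k) μ) :
    Integrable (fun ω => ⨆ k, |Z k ω|) μ := by
  refine (integrable_finsetSum Finset.univ fun k _ => (hZ k).abs).mono
    (AEMeasurable.iSup fun k => (hZ k).aemeasurable.abs).aestronglyMeasurable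
    (ae_of_all _ fun ω => ?_)
  have hsum : 0 ≤ ∑ k, |Z k ω| := Finset.sum_nonneg fun k _ => abs_nonneg _
  rw [norm_of_nonneg (Real.iSup_nonneg fun k => abs_nonneg _), norm_of_nonneg hsum]
  exact Real.iSup_le (fun k => Finset.single_le_sum (f := fun k => |Z k ω|)
    (fun _ _ => abs_nonneg _) (Finset.mem_univ k)) hsum

lemma integrable_exp_mul_iSup_abs [Nonempty ι] (hZ : ∀ k, HasSubgaussianMGF (Z k) c μ)
    {t : ℝ} (ht : 0 ≤ t) : Integrable (fun ω => exp (t * ⨆ k, |Z k ω|)) μ := by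
  have hle := fun ω => exp_mul_iSup_abs_le_sum (fun k => Z k ω) ht
  have hint : ∀ k, Integrable (fun ω => exp (t * Z k ω) + exp (-t * Z k ω)) μ := fun k =>
    ((hZ k).integrable_exp_mul t).add ((hZ k).integrable_exp_mul (-t))
  refine (integrable_finsetSum Finset.univ fun k _ => hint k).mono
    ((integrable_iSup_abs fun k => (hZ k).integrable).aemeasurable.const_mul t).exp.aestronglyMeasurable
    (ae_of_all _ fun ω => ?_)
  rw [norm_of_nonneg (exp_pos _).le, norm_of_nonneg ((exp_pos _).le.trans (hle ω))]
  exact hle ω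

lemma integral_exp_mul_iSup_abs_le [Nonempty ι] (hZ : ∀ k, HasSubgaussianMGF (Z k) c μ)
    {t : ℝ} (ht : 0 ≤ t) :
    ∫ ω, exp (t * ⨆ k, |Z k ω|) ∂μ ≤ 2 * Fintype.card ι * exp (c * t ^ 2 / 2) := by
  have hint : ∀ k, Integrable (fun ω => exp (t * Z k ω) + exp (-t * Z k ω)) μ := fun k =>
    ((hZ k).integrable_exp_mul t).add ((hZ k).integrable_exp_mul (-t))
  calc ∫ ω, exp (t * ⨆ k, |Z k ω|) ∂μ
      ≤ ∫ ω, ∑ k, (exp (t * Z k ω) + exp (-t * Z k ω)) ∂μ :=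
        integral_mono (integrable_exp_mul_iSup_abs hZ ht)
          (integrable_finsetSum _ fun k _ => hint k) fun ω => exp_mul_iSup_abs_le_sum _ ht
    _ = ∑ k, (mgf (Z k) μ t + mgf (Z k) μ (-t)) := by
        rw [integral_finsetSum _ fun k _ => hint k]
        exact Finset.sum_congr rfl fun k _ =>
          integral_add ((hZ k).integrable_exp_mul t) ((hZ k).integrable_exp_mul (-t))
    _ ≤ ∑ k : ι, (exp (c * t ^ 2 / 2) + exp (c * t ^ 2 / 2)) := by
        gcongr with k
        · exact (hZ k).mgf_le t
        · simpa using (hZ k).mgf_le (-t)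
    _ = 2 * Fintype.card ι * exp (c * t ^ 2 / 2) := by
        rw [Finset.sum_const, Finset.card_univ, nsmul_eq_mul]
        ring

theorem integral_iSup_abs_le_of_hasSubgaussianMGF [IsProbabilityMeasure μ] [Nonempty ι]
    (hZ : ∀ k, HasSubgaussianMGF (Z k) c μ) :
    ∫ ω, ⨆ k, |Z k ω| ∂μ ≤ √(2 * c * log (2 * Fintype.card ι)) := by
  refine le_sqrt_of_forall_mul_le c.2 fun t ht => ?_
  have hpos : (0 : ℝ) < 2 * Fintype.card ι := by positivity
  have hG := integrable_iSup_abs fun k => (hZ k).integrable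
  have hjensen : exp (∫ ω, t * ⨆ k, |Z k ω| ∂μ) ≤ ∫ ω, exp (t * ⨆ k, |Z k ω|) ∂μ :=
    convexOn_exp.map_integral_le continuous_exp.continuousOn isClosed_univ
      (ae_of_all _ fun _ => Set.mem_univ _) (hG.const_mul t) (integrable_exp_mul_iSup_abs hZ ht.le)
  rw [integral_const_mul] at hjensen
  have := hjensen.trans (integral_exp_mul_iSup_abs_le hZ ht.le)
  rw [← exp_log hpos, ← exp_add, exp_le_exp] at this
  linarith

end MaximalInequality

section Deterministic

variable {ι κ : Type*} [Fintype ι] [Fintype κ]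

lemma sum_mul_sum_mul_sum_eq (η : ι → ℝ) (x : ι → κ → ℝ) (a u : κ → ℝ) :
    ∑ i, η i * ((∑ j, x i j * a j) * ∑ k, x i k * u k) =
      ∑ j, ∑ k, a j * u k * ∑ i, x i j * x i k * η i := by
  simp_rw [Finset.sum_mul_sum]
  simp_rw [Finset.mul_sum]
  rw [Finset.sum_comm]
  refine Finset.sum_congr rfl fun j _ => ?_
  rw [Finset.sum_comm]
  exact Finset.sum_congr rfl fun k _ => Finset.sum_congr rfl fun i _ => by ring

lemma sum_sum_mul_le (a u : κ → ℝ) (B : κ → κ → ℝ) {G : ℝ} (hB : ∀ j k, |B j k| ≤ G) :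
    ∑ j, ∑ k, a j * u k * B j k ≤ (∑ j, |a j|) * (∑ k, |u k|) * G := by
  rw [Finset.sum_mul_sum, Finset.sum_mul]
  refine Finset.sum_le_sum fun j _ => ?_
  rw [Finset.sum_mul]
  refine Finset.sum_le_sum fun k _ => ?_
  calc a j * u k * B j k ≤ |a j * u k * B j k| := le_abs_self _
    _ = |a j| * |u k| * |B j k| := by rw [abs_mul, abs_mul]
    _ ≤ |a j| * |u k| * G := by gcongr; exact hB j k

lemma sum_mul_sub_sq_le (η : ι → ℝ) (x : ι → κ → ℝ) {β b : κ → ℝ} {L G : ℝ}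
    (hβ : ∑ j, |β j| ≤ L) (hb : ∑ j, |b j| ≤ L) (hG : 0 ≤ G)
    (hZ : ∀ j k, |∑ i, x i j * x i k * η i| ≤ G) :
    ∑ i, η i * ((∑ j, x i j * β j) - ∑ j, x i j * b j) ^ 2 ≤
      ∑ i, η i * (∑ j, x i j * β j) ^ 2 + 3 * L ^ 2 * G := by
  set u : κ → ℝ := fun k => b k - 2 * β k
  have hsplit : ∀ i, η i * ((∑ j, x i j * β j) - ∑ j, x i j * b j) ^ 2 =
      η i * (∑ j, x i j * β j) ^ 2 + η i * ((∑ j, x i j * b j) * ∑ k, x i k * u k) := by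
    intro i
    have : ∑ k, x i k * u k = (∑ j, x i j * b j) - 2 * ∑ j, x i j * β j := by
      simp only [u, mul_sub, Finset.sum_sub_distrib, Finset.mul_sum]
      exact congrArg _ (Finset.sum_congr rfl fun j _ => by ring)
    rw [this]
    ring
  have hu : ∑ k, |u k| ≤ 3 * L := by
    calc ∑ k, |u k| ≤ ∑ k, (|b k| + 2 * |β k|) :=
          Finset.sum_le_sum fun k _ => (abs_sub _ _).trans_eq (by rw [abs_mul, abs_two])
      _ = ∑ k, |b k| + 2 * ∑ k, |β k| := by rw [Finset.sum_add_distrib, Finset.mul_sum]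
      _ ≤ 3 * L := by linarith
  have hb0 : 0 ≤ ∑ j, |b j| := Finset.sum_nonneg fun j _ => abs_nonneg _
  have hu0 : 0 ≤ ∑ k, |u k| := Finset.sum_nonneg fun k _ => abs_nonneg _
  rw [Finset.sum_congr rfl fun i _ => hsplit i, Finset.sum_add_distrib, sum_mul_sum_mul_sum_eq]
  gcongr
  calc _ ≤ (∑ j, |b j|) * (∑ k, |u k|) * G := sum_sum_mul_le b u _ hZ
    _ ≤ L * (3 * L) * G := by gcongr; exact hb0.trans hb
    _ = 3 * L ^ 2 * G := by ring

end Deterministic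

theorem stmt3_general {Ω : Type*} [MeasureSpace Ω] [IsProbabilityMeasure (ℙ : Measure Ω)]
    (n p : ℕ) (hn : 0 < n) (hp : 0 < p)
    (x : Fin n → Fin p → ℝ) (βs : Fin p → ℝ)
    (M : ℝ) (hM : M = ⨆ j : Fin p, (1 / n : ℝ) * ∑ i, x i j ^ 4)
    (L : ℝ) (hβs : ∑ j, |βs j| ≤ L)
    (η : Fin n → Ω → ℝ)
    (hmeas : ∀ i, Measurable (η i))
    (hindep : iIndepFun η ℙ)
    (hdist : ∀ i, ℙ {ω | η i ω = 1} = 1 / 2 ∧ ℙ {ω | η i ω = -1} = 1 / 2) :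
    (∫ ω, ⨆ β : {b : Fin p → ℝ // ∑ j, |b j| ≤ L},
        ∑ i, η i ω * ((∑ j, x i j * βs j) - ∑ j, x i j * β.1 j) ^ 2 ∂ℙ)
      ≤ 3 * L ^ 2 * Real.sqrt (2 * M * n * Real.log (2 * (p : ℝ) ^ 2)) := by
  have : Nonempty (Fin p) := ⟨⟨0, hp⟩⟩
  have : Nonempty {b : Fin p → ℝ // ∑ j, |b j| ≤ L} := ⟨⟨βs, hβs⟩⟩
  have hcol j : ∑ i, x i j ^ 4 ≤ M * n := by
    rw [hM]; exact le_iSup_one_div_mul_mul hn (fun j => ∑ i, x i j ^ 4) j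
  have hMn : 0 ≤ M * n := (Finset.sum_nonneg fun i _ => by positivity).trans (hcol ⟨0, hp⟩)
  set Z : Fin p × Fin p → Ω → ℝ := fun jk ω => ∑ i, x i jk.1 * x i jk.2 * η i ω
  have hη i : HasSubgaussianMGF (η i) 1 ℙ := IsRademacher.hasSubgaussianMGF (hdist i) (hmeas i)
  have hZ jk : HasSubgaussianMGF (Z jk) (M * n).toNNReal ℙ :=
    .sum_mul_mul_of_iIndepFun hindep hη (hcol jk.1) (hcol jk.2)
  have hAint : Integrable (fun ω => ∑ i, η i ω * (∑ j, x i j * βs j) ^ 2) ℙ :=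
    integrable_finsetSum _ fun i _ => (hη i).integrable.mul_const _
  have hGint := integrable_iSup_abs fun jk => (hZ jk).integrable
  have hbound ω : (⨆ β : {b : Fin p → ℝ // ∑ j, |b j| ≤ L},
      ∑ i, η i ω * ((∑ j, x i j * βs j) - ∑ j, x i j * β.1 j) ^ 2) ≤
      ∑ i, η i ω * (∑ j, x i j * βs j) ^ 2 + 3 * L ^ 2 * ⨆ jk, |Z jk ω| :=
    ciSup_le fun β => sum_mul_sub_sq_le (η · ω) x hβs β.2
      (Real.iSup_nonneg fun _ => abs_nonneg _)
      fun j k => le_ciSup (Finite.bddAbove_range fun jk => |Z jk ω|) (j, k)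
  refine integral_le_of_le_of_integrable (hAint.add (hGint.const_mul (3 * L ^ 2))) hbound ?_
    (by positivity)
  rw [integral_add' hAint (hGint.const_mul _),
    integral_sum_mul_eq_zero_of_isRademacher hmeas hdist, zero_add, integral_const_mul]
  gcongr
  refine (integral_iSup_abs_le_of_hasSubgaussianMGF hZ).trans_eq ?_
  rw [Real.coe_toNNReal _ hMn, Fintype.card_prod, Fintype.card_fin, mul_assoc 2 M, sq]
  push_cast
  rfl

/-- For i.i.d. Rademacher signs `η₁,…,ηₙ` and `φ(β) = Σ_i ηᵢ (x_iβ* − x_iβ)²`, if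
`|β*|₁ ≤ L` then `E sup_{|β|₁ ≤ L} φ(β) ≤ 3L² (2 M n log(2p²))^{1/2}`. -/
theorem stmt3 {Ω : Type*} [MeasureSpace Ω] [IsProbabilityMeasure (ℙ : Measure Ω)]
    (n p : ℕ) (hn : 0 < n) (hp : 0 < p)
    (x : Fin n → Fin p → ℝ) (βs : Fin p → ℝ)
    (M : ℝ) (hM : M = ⨆ j : Fin p, (1 / n : ℝ) * ∑ i, x i j ^ 4)
    (L : ℝ) (hL : 0 < L) (hβs : ∑ j, |βs j| ≤ L)
    (η : Fin n → Ω → ℝ)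
    (hmeas : ∀ i, Measurable (η i))
    (hindep : iIndepFun η ℙ)
    (hdist : ∀ i, ℙ {ω | η i ω = 1} = 1 / 2 ∧ ℙ {ω | η i ω = -1} = 1 / 2) :
    (∫ ω, ⨆ β : {b : Fin p → ℝ // ∑ j, |b j| ≤ L},
        ∑ i, η i ω * ((∑ j, x i j * βs j) - ∑ j, x i j * β.1 j) ^ 2 ∂ℙ)
      ≤ 3 * L ^ 2 * Real.sqrt (2 * M * n * Real.log (2 * (p : ℝ) ^ 2)) :=
  stmt3_general n p hn hp x βs M hM L hβs η hmeas hindep hdist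
end

section
/- Let ε₁,…,εₙ be i.i.d. N(0,σ²), let y_i = μ_i + ε_i for fixed reals μ₁,…,μₙ, and let S ⊆ {1,…,n} be a fixed subset. With m := 16|S|σ² + 8 Σ_{i∈S} μ_i², one has P( 4 Σ_{i∈S} y_i² > m ) ≤ 2^{−|S|/2}. -/
/-! Chernoff's bound with `t = 1/(4σ²)` applied to `Σ_{i∈S} yᵢ²`. Completing the square in the
Gaussian integral gives the moment generating function of the square of `Y ~ N(c, v)`,
`E exp(t Y²) = (1 - 2tv)^{-1/2} exp(t c² / (1 - 2tv))` for `2tv < 1`, which for our `t` is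
`√2 · exp(c² / (2σ²))`. The threshold `m/4` is chosen so that `exp(-t m/4)` cancels the factors
`exp(μᵢ² / (2σ²))` exactly, leaving `(√2 / e)^{|S|} ≤ 2^{-|S|/2}`. -/

open MeasureTheory ProbabilityTheory Real
open scoped NNReal

namespace ProbabilityTheory

variable {c t : ℝ} {v : ℝ≥0}

lemma gaussianPDFReal_mul_exp_mul_sq (hv : v ≠ 0) (htv : 1 - 2 * t * v ≠ 0) (x : ℝ) :
    gaussianPDFReal c v x * exp (t * x ^ 2) =
      (√(2 * π * v))⁻¹ * exp (t * c ^ 2 / (1 - 2 * t * v)) *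
        exp (-((1 - 2 * t * v) / (2 * v)) * (x - c / (1 - 2 * t * v)) ^ 2) := by
  have hv' : (v : ℝ) ≠ 0 := NNReal.coe_ne_zero.mpr hv
  rw [gaussianPDFReal_def, mul_assoc, ← exp_add, mul_assoc _ (exp _), ← exp_add]
  congr 2
  generalize hd : 1 - 2 * t * v = d at htv ⊢
  obtain rfl : t = (1 - d) / (2 * v) := by field_simp; linarith
  field_simp
  ring

lemma integrable_exp_mul_sq_gaussianReal (hv : v ≠ 0) (htv : 2 * t * v < 1) :
    Integrable (fun x ↦ exp (t * x ^ 2)) (gaussianReal c v) := by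
  have hv' : (0 : ℝ) < v := NNReal.coe_pos.mpr (pos_iff_ne_zero.mpr hv)
  rw [gaussianReal_of_var_ne_zero _ hv, gaussianPDF_def,
    integrable_withDensity_iff_integrable_smul' (by fun_prop)
      (ae_of_all _ fun _ ↦ ENNReal.ofReal_lt_top)]
  simp_rw [ENNReal.toReal_ofReal (gaussianPDFReal_nonneg _ _ _), smul_eq_mul,
    gaussianPDFReal_mul_exp_mul_sq hv (by linarith)]
  exact ((integrable_exp_neg_mul_sq (by field_simp; linarith)).comp_sub_right _).const_mul _

lemma integral_exp_mul_sq_gaussianReal (hv : v ≠ 0) (htv : 2 * t * v < 1) :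
    ∫ x, exp (t * x ^ 2) ∂gaussianReal c v =
      (√(1 - 2 * t * v))⁻¹ * exp (t * c ^ 2 / (1 - 2 * t * v)) := by
  have hv' : (0 : ℝ) < v := NNReal.coe_pos.mpr (pos_iff_ne_zero.mpr hv)
  have hpos : 0 < 1 - 2 * t * v := by linarith
  simp_rw [integral_gaussianReal_eq_integral_smul hv, smul_eq_mul,
    gaussianPDFReal_mul_exp_mul_sq hv hpos.ne']
  rw [integral_const_mul,
    integral_sub_right_eq_self (fun x ↦ exp (-((1 - 2 * t * v) / (2 * v)) * x ^ 2)),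
    integral_gaussian, div_div_eq_mul_div, mul_comm π, mul_div_assoc, sqrt_div' _ hpos.le]
  have hsqrt : 0 < √(2 * v * π) := by positivity
  field_simp

section RandomVariable

variable {Ω : Type*} [MeasurableSpace Ω] {P : Measure Ω}

lemma integrable_exp_mul_sq_of_map_eq_gaussianReal {X : Ω → ℝ} (hX : AEMeasurable X P)
    (hlaw : P.map X = gaussianReal c v) (hv : v ≠ 0) (htv : 2 * t * v < 1) :
    Integrable (fun ω ↦ exp (t * X ω ^ 2)) P := by
  have h := integrable_exp_mul_sq_gaussianReal (c := c) hv htv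
  rw [← hlaw] at h
  exact h.comp_aemeasurable hX

lemma mgf_sq_of_map_eq_gaussianReal {X : Ω → ℝ} (hX : AEMeasurable X P)
    (hlaw : P.map X = gaussianReal c v) (hv : v ≠ 0) (htv : 2 * t * v < 1) :
    mgf (fun ω ↦ X ω ^ 2) P t =
      (√(1 - 2 * t * v))⁻¹ * exp (t * c ^ 2 / (1 - 2 * t * v)) := by
  rw [mgf, ← integral_exp_mul_sq_gaussianReal hv htv, ← hlaw,
    integral_map hX (by fun_prop)]

lemma iIndepFun.measureReal_sum_sq_ge_le {ι : Type*} {X : ι → Ω → ℝ} {c : ι → ℝ}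
    (hmeas : ∀ i, Measurable (X i)) (hindep : iIndepFun X P)
    (hlaw : ∀ i, P.map (X i) = gaussianReal (c i) v) (hv : v ≠ 0) (ht : 0 ≤ t)
    (htv : 2 * t * v < 1) (s : Finset ι) (a : ℝ) :
    P.real {ω | a ≤ ∑ i ∈ s, X i ω ^ 2} ≤
      exp (-t * a) * ∏ i ∈ s, (√(1 - 2 * t * v))⁻¹ * exp (t * c i ^ 2 / (1 - 2 * t * v)) := by
  have := hindep.isProbabilityMeasure
  have hsq_indep : iIndepFun (fun i ω ↦ X i ω ^ 2) P :=
    hindep.comp (fun _ x ↦ x ^ 2) fun _ ↦ by fun_prop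
  have hsq_meas : ∀ i, Measurable fun ω ↦ X i ω ^ 2 := fun i ↦ by fun_prop
  have hchernoff := measure_ge_le_exp_mul_mgf (X := ∑ i ∈ s, fun ω ↦ X i ω ^ 2) a ht <|
    hsq_indep.integrable_exp_mul_sum hsq_meas fun i _ ↦ integrable_exp_mul_sq_of_map_eq_gaussianReal (hmeas i).aemeasurable (hlaw i) hv htv
  rw [hsq_indep.mgf_sum hsq_meas] at hchernoff
  simpa only [Finset.sum_apply,
    mgf_sq_of_map_eq_gaussianReal (hmeas _).aemeasurable (hlaw _) hv htv] using hchernoff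

end RandomVariable

lemma sqrt_two_pow_mul_exp_neg_le (k : ℕ) : √2 ^ k * exp (-k) ≤ 2 ^ (-(k : ℝ) / 2) := by
  have hsplit : (2 : ℝ) ^ (-(k : ℝ) / 2) = √2 ^ k * 2 ^ (-(k : ℝ)) := by
    rw [sqrt_eq_rpow, ← rpow_mul_natCast zero_le_two, ← rpow_add zero_lt_two]
    ring_nf
  rw [hsplit, ← exp_one_rpow]
  exact mul_le_mul_of_nonneg_left (rpow_le_rpow_of_nonpos zero_lt_two
    (by linarith [exp_one_gt_d9]) (neg_nonpos.mpr k.cast_nonneg)) (by positivity)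

end ProbabilityTheory

theorem stmt15_general {Ω : Type*} [MeasureSpace Ω]
    (n : ℕ) (μs : Fin n → ℝ) (σ : ℝ) (hσ : 0 < σ)
    (ε : Fin n → Ω → ℝ)
    (hmeas : ∀ i, Measurable (ε i))
    (hindep : iIndepFun ε ℙ)
    (hgauss : ∀ i, Measure.map (ε i) ℙ = gaussianReal 0 ⟨σ ^ 2, sq_nonneg σ⟩)
    (y : Fin n → Ω → ℝ) (hy : ∀ i ω, y i ω = μs i + ε i ω)
    (S : Finset (Fin n))
    (m : ℝ) (hm : m = 16 * S.card * σ ^ 2 + 8 * ∑ i ∈ S, (μs i) ^ 2) :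
    (ℙ {ω | m < 4 * ∑ i ∈ S, (y i ω) ^ 2}).toReal ≤ (2 : ℝ) ^ (-(S.card : ℝ) / 2) := by
  have := hindep.isProbabilityMeasure
  simp only [hy]
  set v : ℝ≥0 := ⟨σ ^ 2, sq_nonneg σ⟩
  have hv_coe : (v : ℝ) = σ ^ 2 := rfl
  have hσ2 : 0 < σ ^ 2 := by positivity
  have hv : v ≠ 0 := by simp [← NNReal.coe_ne_zero, hv_coe, hσ2.ne']
  have htv : 1 - 2 * (4 * σ ^ 2)⁻¹ * (v : ℝ) = 1 / 2 := by rw [hv_coe]; field_simp; norm_num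
  have hlaw (i : Fin n) : Measure.map (fun ω ↦ μs i + ε i ω) ℙ = gaussianReal (μs i) v := by
    rw [← Function.comp_def (μs i + ·), ← Measure.map_map (by fun_prop) (hmeas i), hgauss,
      gaussianReal_map_const_add, zero_add]
  have hindep' : iIndepFun (fun i ω ↦ μs i + ε i ω) ℙ :=
    hindep.comp (fun i x ↦ μs i + x) fun _ ↦ by fun_prop
  have hbound := hindep'.measureReal_sum_sq_ge_le (fun i ↦ by fun_prop) hlaw hv
    (t := (4 * σ ^ 2)⁻¹) (by positivity) (by linarith) S (m / 4)
  simp only [htv, Finset.prod_mul_distrib, Finset.prod_const, ← exp_sum] at hbound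
  calc (ℙ {ω | m < 4 * ∑ i ∈ S, (μs i + ε i ω) ^ 2}).toReal
      ≤ (ℙ : Measure Ω).real {ω | m / 4 ≤ ∑ i ∈ S, (μs i + ε i ω) ^ 2} :=
        measureReal_mono <| Set.ofPred_subset_ofPred.mpr fun ω hω ↦ by linarith
    _ ≤ _ := hbound
    _ = √2 ^ S.card * exp (-S.card) := by
        rw [mul_comm, mul_assoc, ← exp_add, hm, one_div, sqrt_inv, inv_inv]
        congr 2
        rw [← Finset.sum_div, ← Finset.mul_sum]
        field_simp
        ring
    _ ≤ 2 ^ (-(S.card : ℝ) / 2) := sqrt_two_pow_mul_exp_neg_le _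

/-- For i.i.d. `εᵢ ~ N(0,σ²)`, `yᵢ = μᵢ + εᵢ`, a fixed `S ⊆ {1,…,n}` and
`m = 16|S|σ² + 8 Σ_{i∈S} μᵢ²`, one has `P(4 Σ_{i∈S} yᵢ² > m) ≤ 2^{−|S|/2}`. -/
theorem stmt15 {Ω : Type*} [MeasureSpace Ω] [IsProbabilityMeasure (ℙ : Measure Ω)]
    (n : ℕ) (μs : Fin n → ℝ) (σ : ℝ) (hσ : 0 < σ)
    (ε : Fin n → Ω → ℝ)
    (hmeas : ∀ i, Measurable (ε i))
    (hindep : iIndepFun ε ℙ)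
    (hgauss : ∀ i, Measure.map (ε i) ℙ = gaussianReal 0 ⟨σ ^ 2, sq_nonneg σ⟩)
    (y : Fin n → Ω → ℝ) (hy : ∀ i ω, y i ω = μs i + ε i ω)
    (S : Finset (Fin n))
    (m : ℝ) (hm : m = 16 * S.card * σ ^ 2 + 8 * ∑ i ∈ S, (μs i) ^ 2) :
    (ℙ {ω | m < 4 * ∑ i ∈ S, (y i ω) ^ 2}).toReal ≤ (2 : ℝ) ^ (-(S.card : ℝ) / 2) :=
  stmt15_general n μs σ hσ ε hmeas hindep hgauss y hy S m hm
end

section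
/- Let ε₁,…,εₙ be i.i.d. N(0,σ²), let y_i = μ_i + ε_i for fixed reals μ₁,…,μₙ, and let I be a random subset of {1,…,n} formed by including each index independently with probability 1/2, independent of ε. With m := 16|I|σ² + 8 Σ_{i∈I} μ_i², one has P( 4 Σ_{i∈I} y_i² > m ) ≤ ((1 + 2^{−1/2})/2)^n. -/
open MeasureTheory ProbabilityTheory Real
open scoped NNReal

/-! Split according to the value `S` of the random subset `I`. Since `I` is uniform and independent
of `ε`, the event `{I = S}` has probability `2⁻ⁿ` and is independent of the event
`∑_{i ∈ S} yᵢ² ≥ ∑_{i ∈ S} (4σ² + 2μᵢ²)`. For `y ~ N(μ, σ²)` one has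
`E exp(y²/(4σ²)) = √2 exp(μ²/(2σ²))`, so the Chernoff bound at `t = 1/(4σ²)` bounds the latter
event by `(√2/e)^|S|`. Summing over `S` gives `((1 + √2/e)/2)ⁿ`, and `√2/e ≤ 2^(-1/2)` as `e ≥ 2`. -/

lemma gaussianPDFReal_mul_exp_sq (c : ℝ) {v : ℝ≥0} (hv : v ≠ 0) (x : ℝ) :
    gaussianPDFReal c v x * exp ((4 * v : ℝ)⁻¹ * x ^ 2)
      = (√(2 * π * v))⁻¹ * exp (c ^ 2 / (2 * v)) * exp (-(4 * v : ℝ)⁻¹ * (x - 2 * c) ^ 2) := by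
  have hv' : (v : ℝ) ≠ 0 := by exact_mod_cast hv
  simp only [gaussianPDFReal, mul_assoc, ← exp_add]
  congr 2
  field_simp
  ring

lemma integral_exp_sq_gaussianReal (c : ℝ) {v : ℝ≥0} (hv : v ≠ 0) :
    ∫ x, exp ((4 * v : ℝ)⁻¹ * x ^ 2) ∂gaussianReal c v = √2 * exp (c ^ 2 / (2 * v)) := by
  have hv' : (0 : ℝ) < v := by positivity
  simp_rw [integral_gaussianReal_eq_integral_smul hv, smul_eq_mul,
    gaussianPDFReal_mul_exp_sq c hv, integral_const_mul,
    integral_sub_right_eq_self (fun x ↦ exp (-(4 * v : ℝ)⁻¹ * x ^ 2)), integral_gaussian]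
  have h : √(π / (4 * v : ℝ)⁻¹) = √2 * √(2 * π * v) := by
    rw [← sqrt_mul (by norm_num)]
    congr 1
    field_simp
    ring
  rw [h]
  field_simp

lemma MeasurableSpace.comap_pi_eq_iSup {Ω α β : Type*} [mβ : MeasurableSpace β]
    (h : α → Ω → β) :
    MeasurableSpace.pi.comap (fun ω a ↦ h a ω) = ⨆ a, mβ.comap (h a) := by
  simp only [MeasurableSpace.pi, MeasurableSpace.comap_iSup, MeasurableSpace.comap_comp]
  rfl

namespace ProbabilityTheory

variable {Ω ι : Type*} {mΩ : MeasurableSpace Ω} {P : Measure Ω}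

lemma mgf_sq_of_hasLaw_gaussianReal {Y : Ω → ℝ} {c : ℝ} {v : ℝ≥0} (hv : v ≠ 0)
    (hY : HasLaw Y (gaussianReal c v) P) :
    mgf (fun ω ↦ Y ω ^ 2) P (4 * v : ℝ)⁻¹ = √2 * exp (c ^ 2 / (2 * v)) := by
  rw [mgf, ← integral_exp_sq_gaussianReal c hv]
  exact hY.integral_comp (f := fun x ↦ exp ((4 * v : ℝ)⁻¹ * x ^ 2)) (by fun_prop)

lemma iIndepFun.measureReal_sum_sq_ge_le_s16 {Y : ι → Ω → ℝ} (hY : iIndepFun Y P) {c : ι → ℝ}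
    {v : ℝ≥0} (hv : v ≠ 0) (hlaw : ∀ i, HasLaw (Y i) (gaussianReal (c i) v) P) (S : Finset ι) :
    P.real {ω | ∑ i ∈ S, (4 * v + 2 * c i ^ 2) ≤ ∑ i ∈ S, Y i ω ^ 2}
      ≤ (√2 * exp (-1)) ^ S.card := by
  have := hY.isProbabilityMeasure
  set t : ℝ := (4 * v : ℝ)⁻¹
  have hv' : (0 : ℝ) < v := by positivity
  have hsq : iIndepFun (fun i ω ↦ Y i ω ^ 2) P := hY.comp (fun _ x ↦ x ^ 2) (fun _ ↦ by fun_prop)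
  have hmgf : mgf (∑ i ∈ S, fun ω ↦ Y i ω ^ 2) P t = ∏ i ∈ S, (√2 * exp (c i ^ 2 / (2 * v))) := by
    rw [hsq.mgf_sum₀ (fun i ↦ (hlaw i).aemeasurable.pow_const 2)]
    exact Finset.prod_congr rfl fun i _ ↦ mgf_sq_of_hasLaw_gaussianReal hv (hlaw i)
  have hint : Integrable (fun ω ↦ exp (t * (∑ i ∈ S, fun ω ↦ Y i ω ^ 2) ω)) P :=
    .of_integral_ne_zero <| by
      rw [← mgf, hmgf]
      exact Finset.prod_ne_zero_iff.2 fun i _ ↦ by positivity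
  calc P.real {ω | ∑ i ∈ S, (4 * v + 2 * c i ^ 2) ≤ ∑ i ∈ S, Y i ω ^ 2}
      ≤ exp (-t * ∑ i ∈ S, (4 * v + 2 * c i ^ 2)) * mgf (∑ i ∈ S, fun ω ↦ Y i ω ^ 2) P t := by
        simpa only [Finset.sum_apply] using measure_ge_le_exp_mul_mgf _ (by positivity) hint
    _ = ∏ i ∈ S, (exp (-t * (4 * v + 2 * c i ^ 2)) * (√2 * exp (c i ^ 2 / (2 * v)))) := by
        rw [hmgf, Finset.mul_sum, exp_sum, ← Finset.prod_mul_distrib]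
    _ = (√2 * exp (-1)) ^ S.card := by
        rw [Finset.prod_eq_pow_card fun i _ ↦ ?_]
        rw [mul_left_comm, ← exp_add]
        congr 2
        simp only [t]
        field_simp
        ring

lemma iIndepFun.indepFun_sumElim {κ β : Type*} [mβ : MeasurableSpace β] {f : ι → Ω → β}
    {g : κ → Ω → β} (h : iIndepFun (Sum.elim f g) P) (hf : ∀ i, Measurable (f i))
    (hg : ∀ j, Measurable (g j)) :
    IndepFun (fun ω i ↦ f i ω) (fun ω j ↦ g j ω) P := by
  have h_le : ∀ k, mβ.comap (Sum.elim f g k) ≤ mΩ := by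
    rintro (i | j)
    exacts [(hf i).comap_le, (hg j).comap_le]
  have := indep_iSup_of_disjoint h_le h.iIndep Set.isCompl_range_inl_range_inr.disjoint
  rw [IndepFun_iff_Indep, MeasurableSpace.comap_pi_eq_iSup, MeasurableSpace.comap_pi_eq_iSup]
  simpa only [iSup_range, Sum.elim_inl, Sum.elim_inr] using this

lemma setOf_eq_finset_eq_preimage_indicator [DecidableEq ι] (I : Ω → Finset ι) (S : Finset ι) :
    {ω | I ω = S} = (fun ω i ↦ if i ∈ I ω then (1 : ℝ) else 0) ⁻¹'
      {fun i ↦ if i ∈ S then 1 else 0} := by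
  ext ω
  simp only [Set.mem_ofPred_eq, Set.mem_preimage, Set.mem_singleton_iff, Finset.ext_iff, funext_iff]
  refine forall_congr' fun i ↦ ?_
  split_ifs <;> simp_all

lemma measure_eq_finset_of_iIndepFun_indicator [Fintype ι] [DecidableEq ι] {I : Ω → Finset ι}
    (hmeas : ∀ i, MeasurableSet {ω | i ∈ I ω})
    (hindep : iIndepFun (fun i ω ↦ if i ∈ I ω then (1 : ℝ) else 0) P)
    (hhalf : ∀ i, P {ω | i ∈ I ω} = 1 / 2) (S : Finset ι) :
    P {ω | I ω = S} = 2⁻¹ ^ Fintype.card ι := by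
  have := hindep.isProbabilityMeasure
  have hI : {ω | I ω = S} = ⋂ i, (fun ω ↦ if i ∈ I ω then (1 : ℝ) else 0) ⁻¹'
      {if i ∈ S then 1 else 0} := by
    rw [setOf_eq_finset_eq_preimage_indicator]
    ext ω
    simp [funext_iff]
  have hfactor : ∀ i, P ((fun ω ↦ if i ∈ I ω then (1 : ℝ) else 0) ⁻¹' {if i ∈ S then 1 else 0})
      = 2⁻¹ := by
    intro i
    by_cases hi : i ∈ S
    · convert hhalf i using 2
      · ext ω; simp [hi]
      · simp
    · have : (fun ω ↦ if i ∈ I ω then (1 : ℝ) else 0) ⁻¹' {if i ∈ S then 1 else 0}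
          = {ω | i ∈ I ω}ᶜ := by ext ω; simp [hi]
      rw [this, prob_compl_eq_one_sub (hmeas i), hhalf i, one_div, ENNReal.one_sub_inv_two]
  rw [hI, hindep.meas_iInter fun i ↦ ⟨_, measurableSet_singleton _, rfl⟩]
  simp [hfactor]

lemma measure_setOf_eq_finset_inter_preimage [Fintype ι] [DecidableEq ι] {β : Type*}
    [MeasurableSpace β] {X : Ω → β} {I : Ω → Finset ι} (hmeas : ∀ i, MeasurableSet {ω | i ∈ I ω})
    (hindep : iIndepFun (fun i ω ↦ if i ∈ I ω then (1 : ℝ) else 0) P)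
    (hXI : IndepFun X (fun ω i ↦ if i ∈ I ω then (1 : ℝ) else 0) P)
    (hhalf : ∀ i, P {ω | i ∈ I ω} = 1 / 2) (S : Finset ι) {s : Set β} (hs : MeasurableSet s) :
    P ({ω | I ω = S} ∩ X ⁻¹' s) = 2⁻¹ ^ Fintype.card ι * P (X ⁻¹' s) := by
  rw [← measure_eq_finset_of_iIndepFun_indicator hmeas hindep hhalf S,
    setOf_eq_finset_eq_preimage_indicator]
  exact hXI.symm.meas_inter ⟨_, measurableSet_singleton _, rfl⟩ ⟨_, hs, rfl⟩

end ProbabilityTheory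

lemma sqrt_two_mul_exp_neg_one_le : √2 * exp (-1) ≤ 2 ^ (-(1 : ℝ) / 2) := by
  rw [neg_div, rpow_neg zero_le_two, ← sqrt_eq_rpow, exp_neg,
    le_inv_comm₀ (by positivity) (by positivity), mul_inv, inv_inv, le_inv_mul_iff₀ (by positivity),
    mul_self_sqrt zero_le_two]
  linarith [exp_one_gt_d9]

/-- For i.i.d. `εᵢ ~ N(0,σ²)`, `yᵢ = μᵢ + εᵢ`, and a uniformly random subset `I` of
`{1,…,n}` (each index included independently with probability 1/2, independently of `ε`),
with `m = 16|I|σ² + 8 Σ_{i∈I} μᵢ²` one has `P(4 Σ_{i∈I} yᵢ² > m) ≤ ((1+2^{−1/2})/2)^n`. -/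
theorem stmt16 {Ω : Type*} [MeasureSpace Ω] [IsProbabilityMeasure (ℙ : Measure Ω)]
    (n : ℕ) (μs : Fin n → ℝ) (σ : ℝ) (hσ : 0 < σ)
    (ε : Fin n → Ω → ℝ)
    (hmeas : ∀ i, Measurable (ε i))
    (I : Ω → Finset (Fin n))
    (hImeas : ∀ i, MeasurableSet {ω | i ∈ I ω})
    (hindep : iIndepFun
      (Sum.elim ε (fun i ω => if i ∈ I ω then (1 : ℝ) else 0)) ℙ)
    (hgauss : ∀ i, Measure.map (ε i) ℙ = gaussianReal 0 ⟨σ ^ 2, sq_nonneg σ⟩)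
    (hI : ∀ i, ℙ {ω | i ∈ I ω} = 1 / 2)
    (y : Fin n → Ω → ℝ) (hy : ∀ i ω, y i ω = μs i + ε i ω) :
    (ℙ {ω | 16 * (I ω).card * σ ^ 2 + 8 * ∑ i ∈ I ω, (μs i) ^ 2
          < 4 * ∑ i ∈ I ω, (y i ω) ^ 2}).toReal
      ≤ ((1 + (2 : ℝ) ^ (-(1 : ℝ) / 2)) / 2) ^ n := by
  set v : ℝ≥0 := ⟨σ ^ 2, sq_nonneg σ⟩
  have hv : v ≠ 0 := by rw [Ne, ← NNReal.coe_eq_zero]; exact (pow_pos hσ 2).ne'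
  have hlaw : ∀ i, HasLaw (fun ω ↦ μs i + ε i ω) (gaussianReal (μs i) v) ℙ := fun i ↦ by
    simpa using gaussianReal_const_add ⟨(hmeas i).aemeasurable, hgauss i⟩ (μs i)
  have hY_indep : iIndepFun (fun i ω ↦ μs i + ε i ω) ℙ :=
    (hindep.precomp Sum.inl_injective).comp _ fun i ↦ measurable_const_add (μs i)
  have hεχ := hindep.indepFun_sumElim hmeas fun i ↦ measurable_const.ite (hImeas i) measurable_const
  set A : Finset (Fin n) → Set (Fin n → ℝ) :=
    fun S ↦ {e | ∑ i ∈ S, (4 * v + 2 * μs i ^ 2) ≤ ∑ i ∈ S, (μs i + e i) ^ 2}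
  have hsub : {ω | 16 * (I ω).card * σ ^ 2 + 8 * ∑ i ∈ I ω, (μs i) ^ 2
      < 4 * ∑ i ∈ I ω, (y i ω) ^ 2} ⊆ ⋃ S, {ω | I ω = S} ∩ (fun ω i ↦ ε i ω) ⁻¹' A S := by
    intro ω hω
    refine Set.mem_iUnion.2 ⟨I ω, rfl, ?_⟩
    simp only [A, hy, Set.mem_preimage, Set.mem_ofPred_eq, Finset.sum_add_distrib,
      Finset.sum_const, ← Finset.mul_sum] at hω ⊢
    rw [nsmul_eq_mul, show (v : ℝ) = σ ^ 2 from rfl]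
    linarith
  calc (ℙ _).toReal ≤ ∑ S, volume.real ({ω | I ω = S} ∩ (fun ω i ↦ ε i ω) ⁻¹' A S) :=
        (measureReal_mono hsub).trans (measureReal_iUnion_fintype_le _)
    _ = ∑ S, (2⁻¹ : ℝ) ^ n * volume.real ((fun ω i ↦ ε i ω) ⁻¹' A S) := by
        refine Finset.sum_congr rfl fun S _ ↦ ?_
        rw [measureReal_def, measure_setOf_eq_finset_inter_preimage hImeas
          (hindep.precomp Sum.inr_injective) hεχ hI S (measurableSet_le (by fun_prop) (by fun_prop)),
          ENNReal.toReal_mul, ENNReal.toReal_pow, ENNReal.toReal_inv, ENNReal.toReal_ofNat,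
          Fintype.card_fin, measureReal_def]
    _ ≤ ∑ S : Finset (Fin n), (2⁻¹ : ℝ) ^ n * (√2 * exp (-1)) ^ S.card := by
        gcongr with S
        exact hY_indep.measureReal_sum_sq_ge_le_s16 hv hlaw S
    _ = ((1 + √2 * exp (-1)) / 2) ^ n := by
        rw [← Finset.mul_sum, div_eq_inv_mul, mul_pow, add_comm]
        simpa using Fin.sum_pow_mul_eq_add_pow (√2 * exp (-1)) (1 : ℝ)
    _ ≤ _ := by gcongr; exact sqrt_two_mul_exp_neg_one_le
end
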